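/- If G is a connected simple graph that is not complete and its complement Ḡ is triangle-free, then pc(G) = 2. -/

import Mathlib

/-!
Colour the edges of a Hamiltonian path alternately (all other edges arbitrarily). Any two
vertices are joined by a segment of this path, which is properly coloured, so `pc G ≤ 2`, while
two non-adjacent vertices can only be joined by paths with two consecutive edges, so `pc G ≥ 2`.

A Hamiltonian path exists because a longest path `P`, from `u` to `v`, is Hamiltonian: a vertex
`w` off `P` is adjacent to neither `u` nor `v` (else `P` extends), so `uv` is an edge, as `Gᶜ`
contains no triangle `uvw`. Closing `P` by `uv` gives a cycle longer than every path, and in a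
connected graph such a cycle meets every vertex: otherwise an edge leaving it, followed by the
cycle minus one edge, would be a longer path.
-/

open SimpleGraph

/-- An edge-coloring `c` with `k` colors is a proper-path coloring of `G` if every pair of
distinct vertices is joined by a path on which no two consecutive edges share a color. -/
def IsProperPathColoring {V : Type*} (G : SimpleGraph V) {k : ℕ}
    (c : Sym2 V → Fin k) : Prop :=
  ∀ u v : V, u ≠ v → ∃ p : G.Walk u v, p.IsPath ∧ (p.edges.map c).Chain' (· ≠ ·)

/-- The proper connection number of `G`: the least number of colors in a
proper-path coloring of `G`. -/
noncomputable def pc {V : Type*} (G : SimpleGraph V) : ℕ :=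
  sInf {k : ℕ | ∃ c : Sym2 V → Fin k, IsProperPathColoring G c}

lemma List.Nodup.isChain_ne_map_idxOf_mod_two {α : Type*} [DecidableEq α] {l : List α}
    (hl : l.Nodup) : (l.map fun a => Fin.ofNat 2 (l.idxOf a)).IsChain (· ≠ ·) := by
  refine List.isChain_iff_getElem.mpr fun i hi => ?_
  simp only [List.length_map] at hi
  simp only [List.getElem_map, hl.idxOf_getElem, ne_eq, Fin.ext_iff, Fin.val_ofNat]
  omega

namespace SimpleGraph

variable {V : Type*} {G : SimpleGraph V}

lemma adj_of_compl_cliqueFree_three (h : Gᶜ.CliqueFree 3) {u v w : V} (huv : u ≠ v)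
    (huw : u ≠ w) (hvw : v ≠ w) (hu : ¬G.Adj u w) (hv : ¬G.Adj v w) : G.Adj u v := by
  classical
  by_contra huv'
  exact h {u, v, w} (is3Clique_triple_iff.mpr ⟨⟨huv, huv'⟩, ⟨huw, hu⟩, ⟨hvw, hv⟩⟩)

namespace Walk

variable {u v w : V}

def IsLongestPath (p : G.Walk u v) : Prop :=
  p.IsPath ∧ ∀ ⦃a b : V⦄ (q : G.Walk a b), q.IsPath → q.length ≤ p.length

lemma IsLongestPath.reverse {p : G.Walk u v} (hp : p.IsLongestPath) : p.reverse.IsLongestPath :=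
  ⟨hp.1.reverse, by simpa using hp.2⟩

lemma IsLongestPath.mem_support_of_adj_start {p : G.Walk u v} (hp : p.IsLongestPath)
    (h : G.Adj w u) : w ∈ p.support := by
  by_contra hw
  simpa using hp.2 (cons h p) (hp.1.cons hw)

lemma IsLongestPath.mem_support_of_adj_end {p : G.Walk u v} (hp : p.IsLongestPath)
    (h : G.Adj w v) : w ∈ p.support := by
  simpa using hp.reverse.mem_support_of_adj_start h

lemma IsCycle.mem_support_of_forall_length_lt (hG : G.Connected) {c : G.Walk v v}
    (hc : c.IsCycle) (hlong : ∀ ⦃a b : V⦄ (q : G.Walk a b), q.IsPath → q.length < c.length)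
    (w : V) : w ∈ c.support := by
  classical
  by_contra hw
  obtain ⟨d, -, hd_in, hd_out⟩ := (hG.preconnected v w).some.exists_boundary_dart
    {x | x ∈ c.support} c.start_mem_support hw
  let c' := c.rotate d.fst hd_in
  have hc' : c'.IsCycle := hc.rotate hd_in
  have hout : d.snd ∉ c'.tail.support := fun h =>
    hd_out ((mem_support_rotate_iff c _ hd_in).mp
      (List.mem_of_mem_tail (support_tail_of_not_nil _ hc'.not_nil ▸ h)))
  have := hlong _ (hc'.isPath_tail.concat hout d.adj)
  rw [length_concat, length_tail_add_one hc'.not_nil, length_rotate] at this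
  exact lt_irrefl _ this

lemma IsLongestPath.isHamiltonian [DecidableEq V] (hG : G.Connected) (htf : Gᶜ.CliqueFree 3)
    {p : G.Walk u v} (hp : p.IsLongestPath) : p.IsHamiltonian := by
  refine hp.1.isHamiltonian_iff.mpr fun w => ?_
  by_contra hw
  have hwu : ¬G.Adj w u := fun h => hw (hp.mem_support_of_adj_start h)
  have hwv : ¬G.Adj w v := fun h => hw (hp.mem_support_of_adj_end h)
  have hne_u : w ≠ u := fun h => hw (h ▸ p.start_mem_support)
  have hne_v : w ≠ v := fun h => hw (h ▸ p.end_mem_support)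
  have hlen : 2 ≤ p.length := by
    obtain ⟨q, hq, hqlen⟩ := hG.exists_path_of_dist w u
    exact hqlen ▸ hG.one_lt_dist_of_ne_of_not_adj hne_u hwu |>.trans_le (hp.2 q hq)
  have huv : u ≠ v := by
    rintro rfl
    simp [(isPath_iff_nil.mp hp.1).length_eq_zero] at hlen
  have hadj : G.Adj u v :=
    adj_of_compl_cliqueFree_three htf huv hne_u.symm hne_v.symm (fun h => hwu h.symm)
      (fun h => hwv h.symm)
  have hcyc : (cons hadj.symm p).IsCycle := by
    refine (cons_isCycle_iff p hadj.symm).mpr ⟨hp.1, fun he => ?_⟩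
    have := hp.1.length_eq_one_of_mem_edges (Sym2.eq_swap ▸ he)
    omega
  have := hcyc.mem_support_of_forall_length_lt hG
    (fun a b q hq => Nat.lt_succ_of_le (hp.2 q hq)) w
  simp [hne_v, hw] at this

lemma exists_isSubwalk_of_mem_support {p : G.Walk u v} {x y : V}
    (hx : x ∈ p.support) (hy : y ∈ p.support) :
    ∃ q : G.Walk x y, q.IsSubwalk p ∨ q.reverse.IsSubwalk p := by
  classical
  obtain ⟨q, r, rfl⟩ := mem_support_iff_exists_append.mp hy
  rw [support_append, List.mem_append] at hx
  rcases hx with hx | hx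
  · exact ⟨q.dropUntil x hx,
      .inl ((q.isSubwalk_dropUntil hx).trans (isSubwalk_of_append_left rfl))⟩
  · refine ⟨(r.takeUntil x (List.mem_of_mem_tail hx)).reverse, .inr ?_⟩
    rw [reverse_reverse]
    exact (r.isSubwalk_takeUntil _).trans (isSubwalk_of_append_right rfl)

def alternatingColoring [DecidableEq V] (p : G.Walk u v) : Sym2 V → Fin 2 :=
  fun e => Fin.ofNat 2 (p.edges.idxOf e)

lemma IsHamiltonian.isProperPathColoring_alternatingColoring [DecidableEq V] {p : G.Walk u v}
    (hp : p.IsHamiltonian) : IsProperPathColoring G p.alternatingColoring := by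
  have hchain {x y : V} (q : G.Walk x y) (hq : q.IsSubwalk p) :
      (q.edges.map p.alternatingColoring).IsChain (· ≠ ·) :=
    (hp.isPath.edges_nodup.isChain_ne_map_idxOf_mod_two).infix (hq.edges_isInfix.map _)
  intro x y _
  obtain ⟨q, hq | hq⟩ := exists_isSubwalk_of_mem_support (hp.mem_support x) (hp.mem_support y)
  · exact ⟨q, isPath_of_isSubwalk hq hp.isPath, hchain q hq⟩
  · refine ⟨q, by simpa using isPath_of_isSubwalk hq hp.isPath, ?_⟩
    have := hchain _ hq
    rw [edges_reverse, List.map_reverse, List.isChain_reverse] at this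
    exact this.imp fun _ _ => Ne.symm

end Walk

lemma exists_isLongestPath [Finite V] [Nonempty V] (G : SimpleGraph V) :
    ∃ (u v : V) (p : G.Walk u v), p.IsLongestPath := by
  have := Fintype.ofFinite V
  let lengths := {n | ∃ (u v : V) (p : G.Walk u v), p.IsPath ∧ p.length = n}
  have hne : lengths.Nonempty := ⟨0, Classical.arbitrary V, _, .nil, .nil, rfl⟩
  have hbdd : BddAbove lengths := by
    refine ⟨Fintype.card V, ?_⟩
    rintro _ ⟨u, v, p, hp, rfl⟩
    exact hp.length_lt.le
  obtain ⟨u, v, p, hp, hlen⟩ := Nat.sSup_mem hne hbdd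
  exact ⟨u, v, p, hp, fun a b q hq => hlen ▸ le_csSup hbdd ⟨a, b, q, hq, rfl⟩⟩

end SimpleGraph

lemma IsProperPathColoring.two_le {V : Type*} {G : SimpleGraph V} {k : ℕ} {c : Sym2 V → Fin k}
    (hc : IsProperPathColoring G c) (hG : G ≠ ⊤) : 2 ≤ k := by
  obtain ⟨u, v, huv, hnadj⟩ := ne_top_iff_exists_not_adj.mp hG
  obtain ⟨p, -, hchain⟩ := hc u v huv
  cases p with
  | nil => exact absurd rfl huv
  | cons h q =>
    cases q with
    | nil => exact absurd h hnadj
    | cons _ _ =>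
      have hne := (List.isChain_cons_cons.mp hchain).1
      exact (by simpa using Fintype.one_lt_card_iff.mpr ⟨_, _, hne⟩ : 1 < k)

/-- If `G` is connected, noncomplete, and its complement is triangle-free,
then `pc G = 2`. -/
theorem pc_eq_two_of_compl_triangle_free {V : Type*} [Fintype V] (G : SimpleGraph V)
    (hG : G.Connected) (hnc : G ≠ ⊤) (htf : Gᶜ.CliqueFree 3) :
    pc G = 2 := by
  classical
  have := hG.nonempty
  obtain ⟨_, _, p, hp⟩ := G.exists_isLongestPath
  have h2 : 2 ∈ {k | ∃ c : Sym2 V → Fin k, IsProperPathColoring G c} :=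
    ⟨_, (hp.isHamiltonian hG htf).isProperPathColoring_alternatingColoring⟩
  exact le_antisymm (Nat.sInf_le h2) (le_csInf ⟨2, h2⟩ fun _ ⟨_, hc⟩ => hc.two_le hnc)
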